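/- A unary algebra (A, F) (all operations in F unary) is a Ramsey algebra if and only if for each a ∈ A there exists a finite composite G of functions from F such that G(a) is a fixed point of every f ∈ F. -/
import Mathlib


namespace RamseyAlg

/- Orderly-term syntax trees over an operation-index type `ι`:
`leaf` is the identity (a single variable), `node g f` applies the basic
operation `g` to the results of the trees in the forest `f`. -/
mutual
  inductive OTree (ι : Type) : Type
    | leaf : OTree ι
    | node : ι → OForest ι → OTree ι
  inductive OForest (ι : Type) : Type
    | nil : OForest ι
    | cons : OTree ι → OForest ι → OForest ι
end

def OForest.length {ι : Type} : OForest ι → ℕ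
  | .nil => 0
  | .cons _ f => f.length + 1

/- Well-formedness: each node applies a `k`-ary basic operation to exactly
`k` subtrees, where `ar` gives the arities. -/
mutual
  def OTree.WF {ι : Type} (ar : ι → ℕ) : OTree ι → Prop
    | .leaf => True
    | .node g f => OForest.length f = ar g ∧ OForest.WF ar f
  def OForest.WF {ι : Type} (ar : ι → ℕ) : OForest ι → Prop
    | .nil => True
    | .cons t f => OTree.WF ar t ∧ OForest.WF ar f
end

/- Evaluation of an orderly term on an input list: the variables of the term
consume an initial segment of the list, in order, each exactly once; what
remains of the list is returned alongside the value. -/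
mutual
  def OTree.evalAux {ι A : Type} (F : ι → List A → A) :
      OTree ι → List A → Option (A × List A)
    | .leaf, [] => none
    | .leaf, a :: rest => some (a, rest)
    | .node g f, l =>
      match OForest.evalAux F f l with
      | none => none
      | some (rs, rest) => some (F g rs, rest)
  def OForest.evalAux {ι A : Type} (F : ι → List A → A) :
      OForest ι → List A → Option (List A × List A)
    | .nil, l => some ([], l)
    | .cons t f, l =>
      match OTree.evalAux F t l with
      | none => none
      | some (r, rest) =>
        match OForest.evalAux F f rest with
        | none => none
        | some (rs, rest') => some (r :: rs, rest')
end

/- The value of the orderly term `t` on the finite sequence `l`, defined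
exactly when the variables of `t` consume all of `l`. -/
def OTree.eval {ι A : Type} (F : ι → List A → A) (t : OTree ι) (l : List A) :
    Option A :=
  match OTree.evalAux F t l with
  | some (a, []) => some a
  | _ => none

/- `Reduction ar F a b` : `a` is a reduction of `b` with respect to `F`, i.e.
there are well-formed orderly terms `t j` applied to consecutive disjoint
finite subsequences of `b` (extracted by the strictly monotone `e`, in blocks
of lengths `len j`) producing the terms of `a` in order. -/
def Reduction {ι A : Type} (ar : ι → ℕ) (F : ι → List A → A)
    (a b : ℕ → A) : Prop :=
  ∃ (t : ℕ → OTree ι) (len : ℕ → ℕ) (e : ℕ → ℕ),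
    StrictMono e ∧ (∀ j, (t j).WF ar) ∧
    ∀ j, (t j).eval F ((List.range (len j)).map
        (fun i => b (e ((∑ m ∈ Finset.range j, len m) + i)))) = some (a j)

/- `FR ar F b` : the set of values of orderly terms over `F` applied to
finite subsequences of `b`. -/
def FR {ι A : Type} (ar : ι → ℕ) (F : ι → List A → A) (b : ℕ → A) : Set A :=
  { x | ∃ (t : OTree ι) (l : List ℕ), t.WF ar ∧ l.Chain' (· < ·) ∧
      t.eval F (l.map b) = some x }

/- `(A, F)` is a Ramsey algebra: every infinite sequence has, for every
`X ⊆ A`, a reduction homogeneous for `X`. -/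
def RamseyAlgebra {ι A : Type} (ar : ι → ℕ) (F : ι → List A → A) : Prop :=
  ∀ (b : ℕ → A) (X : Set A), ∃ a : ℕ → A,
    Reduction ar F a b ∧ (FR ar F a ⊆ X ∨ FR ar F a ∩ X = ∅)

end RamseyAlg

namespace RamseyAlgAux
open RamseyAlg

variable {ι A : Type}

inductive Reach (F : ι → A → A) : A → A → Prop
  | refl (a : A) : Reach F a a
  | step (i : ι) {a v : A} : Reach F a v → Reach F a (F i v)

theorem Reach.trans {F : ι → A → A} {a b c : A} (h1 : Reach F a b) (h2 : Reach F b c) :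
    Reach F a c := by
  induction h2 with
  | refl => exact h1
  | step i _ ih => exact .step i (ih h1)

def comp (F : ι → A → A) (L : List ι) (a : A) : A := L.foldr (fun j h => F j ∘ h) id a

@[simp] theorem comp_nil (F : ι → A → A) (a : A) : comp F [] a = a := rfl

@[simp] theorem comp_cons (F : ι → A → A) (i : ι) (L : List ι) (a : A) :
    comp F (i :: L) a = F i (comp F L a) := rfl

theorem reach_iff {F : ι → A → A} {a v : A} : Reach F a v ↔ ∃ L, comp F L a = v := by
  constructor
  · intro h
    induction h with
    | refl => exact ⟨[], rfl⟩
    | step i _ ih => obtain ⟨L, hL⟩ := ih; exact ⟨i :: L, by simp [hL]⟩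
  · rintro ⟨L, rfl⟩
    induction L with
    | nil => exact .refl a
    | cons i L ih => exact .step i ih

def ofList : List ι → OTree ι
  | [] => .leaf
  | i :: L => .node i (.cons (ofList L) .nil)

theorem ofList_wf (L : List ι) : (ofList L).WF (fun _ => 1) := by
  induction L with
  | nil => trivial
  | cons i L ih => exact ⟨rfl, ih, trivial⟩

theorem evalAux_ofList (F : ι → A → A) (Fop : ι → List A → A)
    (hOp : ∀ i x, Fop i [x] = F i x) (L : List ι) (x : A) (rest : List A) :
    OTree.evalAux Fop (ofList L) (x :: rest) = some (comp F L x, rest) := by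
  induction L with
  | nil => rfl
  | cons i L ih =>
    simp only [ofList, OTree.evalAux, OForest.evalAux, ih, hOp, comp_cons]

theorem eval_ofList (F : ι → A → A) (Fop : ι → List A → A)
    (hOp : ∀ i x, Fop i [x] = F i x) (L : List ι) (x : A) :
    OTree.eval Fop (ofList L) [x] = some (comp F L x) := by
  simp [OTree.eval, evalAux_ofList F Fop hOp]

end RamseyAlgAux

namespace RamseyAlgAux
open RamseyAlg

variable {ι A : Type}

mutual
theorem tree_unary (F : ι → A → A) (Fop : ι → List A → A)
    (hOp : ∀ i x, Fop i [x] = F i x) (t : OTree ι) (ht : t.WF (fun _ => 1)) :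
    ∀ l v rest, OTree.evalAux Fop t l = some (v, rest) →
      ∃ y, l = y :: rest ∧ Reach F y v := by
  match t with
  | .leaf =>
    intro l v rest h
    match l, h with
    | a :: rest', h =>
      simp only [OTree.evalAux, Option.some.injEq, Prod.mk.injEq] at h
      obtain ⟨rfl, rfl⟩ := h
      exact ⟨a, rfl, .refl a⟩
  | .node g f =>
    intro l v rest h
    obtain ⟨hlen, hwf⟩ := ht
    simp only [OTree.evalAux] at h
    match hfa : OForest.evalAux Fop f l with
    | none => rw [hfa] at h; exact absurd h (by simp)
    | some (rs, rest') =>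
      rw [hfa] at h
      simp only [Option.some.injEq, Prod.mk.injEq] at h
      obtain ⟨hv, hrest⟩ := h
      obtain ⟨y, v', hl, hrs, hr⟩ := forest_unary F Fop hOp f hlen hwf l rs rest' hfa
      subst hrs hrest
      exact ⟨y, hl, hv ▸ (hOp g v' ▸ Reach.step g hr)⟩

theorem forest_unary (F : ι → A → A) (Fop : ι → List A → A)
    (hOp : ∀ i x, Fop i [x] = F i x) (f : OForest ι) (hlen : f.length = 1)
    (hf : f.WF (fun _ => 1)) :
    ∀ l vs rest, OForest.evalAux Fop f l = some (vs, rest) →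
      ∃ y v, l = y :: rest ∧ vs = [v] ∧ Reach F y v := by
  match f with
  | .cons t f' =>
    have hf0 : f' = .nil := by
      cases f' with
      | nil => rfl
      | cons _ _ => simp [OForest.length] at hlen
    subst hf0
    intro l vs rest h
    simp only [OForest.evalAux] at h
    match hta : OTree.evalAux Fop t l with
    | none => rw [hta] at h; exact absurd h (by simp)
    | some (r, rest₁) =>
      rw [hta] at h
      simp only [Option.some.injEq, Prod.mk.injEq] at h
      obtain ⟨hvs, hrest⟩ := h
      obtain ⟨y, hl, hr⟩ := tree_unary F Fop hOp t hf.1 l r rest₁ hta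
      exact ⟨y, r, by rw [hl, hrest], hvs.symm, hr⟩
end

end RamseyAlgAux

namespace RamseyAlgAux
open RamseyAlg

variable {ι A : Type}

theorem eval_unary (F : ι → A → A) (Fop : ι → List A → A)
    (hOp : ∀ i x, Fop i [x] = F i x) (t : OTree ι) (ht : t.WF (fun _ => 1))
    (l : List A) (x : A) (h : OTree.eval Fop t l = some x) :
    ∃ y, l = [y] ∧ Reach F y x := by
  unfold OTree.eval at h
  match haux : OTree.evalAux Fop t l with
  | none => rw [haux] at h; exact absurd h (by simp)
  | some (v, rest) =>
    rw [haux] at h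
    match rest, h with
    | [], h =>
      simp only [Option.some.injEq] at h
      obtain ⟨y, hl, hr⟩ := tree_unary F Fop hOp t ht l v [] haux
      exact ⟨y, hl, h ▸ hr⟩

theorem mem_FR_iff (F : ι → A → A) (Fop : ι → List A → A)
    (hOp : ∀ i x, Fop i [x] = F i x) (a : ℕ → A) (x : A) :
    x ∈ FR (fun _ : ι => 1) Fop a ↔ ∃ j, Reach F (a j) x := by
  constructor
  · rintro ⟨t, l, hwf, _, hev⟩
    obtain ⟨y, hl, hr⟩ := eval_unary F Fop hOp t hwf (l.map a) x hev
    match l, hl with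
    | [j], hl =>
      simp only [List.map_cons, List.map_nil, List.cons.injEq] at hl
      exact ⟨j, hl.1 ▸ hr⟩
  · rintro ⟨j, hr⟩
    obtain ⟨L, rfl⟩ := reach_iff.mp hr
    exact ⟨ofList L, [j], ofList_wf L, List.isChain_singleton j,
      by simpa using eval_ofList F Fop hOp L (a j)⟩

theorem reach_fixed {F : ι → A → A} {y x : A} (hy : ∀ i, F i y = y)
    (h : Reach F y x) : x = y := by
  induction h with
  | refl => rfl
  | step i _ ih => rw [ih hy, hy]

end RamseyAlgAux

namespace RamseyAlgAux

variable {A : Type} (s : A → A)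

def gr (v w : A) : Prop := ∃ m n, s^[m] v = s^[n] w

theorem gr_refl (v : A) : gr s v v := ⟨0, 0, rfl⟩

theorem gr_symm {v w : A} (h : gr s v w) : gr s w v :=
  let ⟨m, n, h⟩ := h; ⟨n, m, h.symm⟩

theorem gr_trans {u v w : A} (h1 : gr s u v) (h2 : gr s v w) : gr s u w := by
  obtain ⟨m, n, h1⟩ := h1
  obtain ⟨m', n', h2⟩ := h2
  refine ⟨m' + m, n + n', ?_⟩
  calc s^[m' + m] u = s^[m'] (s^[m] u) := Function.iterate_add_apply s m' m u
    _ = s^[m'] (s^[n] v) := by rw [h1]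
    _ = s^[n] (s^[m'] v) := by
        rw [← Function.iterate_add_apply, ← Function.iterate_add_apply, Nat.add_comm]
    _ = s^[n] (s^[n'] w) := by rw [h2]
    _ = s^[n + n'] w := (Function.iterate_add_apply s n n' w).symm

def grSetoid : Setoid A := ⟨gr s, gr_refl s, fun h => gr_symm s h, fun h1 h2 => gr_trans s h1 h2⟩

noncomputable def rep (v : A) : A := (Quotient.mk (grSetoid s) v).out

theorem gr_rep (v : A) : gr s (rep s v) v :=
  Quotient.exact (Quotient.out_eq (Quotient.mk (grSetoid s) v))

theorem rep_eq {v w : A} (h : gr s v w) : rep s v = rep s w := by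
  unfold rep
  rw [Quotient.sound (s := grSetoid s) h]

def Per (v : A) : Prop := ∃ n, 0 < n ∧ s^[n] v = v

def ClassPer (v : A) : Prop := ∃ w, gr s v w ∧ Per s w

theorem classPer_congr {v w : A} (h : gr s v w) : ClassPer s v ↔ ClassPer s w :=
  ⟨fun ⟨u, hu, hp⟩ => ⟨u, gr_trans s (gr_symm s h) hu, hp⟩,
   fun ⟨u, hu, hp⟩ => ⟨u, gr_trans s h hu, hp⟩⟩

open Classical in
noncomputable def qpt (v : A) : A :=
  if h : ClassPer s (rep s v) then h.choose else rep s v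

theorem qpt_eq {v w : A} (h : gr s v w) : qpt s v = qpt s w := by
  unfold qpt
  rw [rep_eq s h]

theorem qpt_spec {v : A} (h : ClassPer s v) : gr s v (qpt s v) ∧ Per s (qpt s v) := by
  have h' : ClassPer s (rep s v) := (classPer_congr s (gr_rep s v)).mpr h
  unfold qpt
  rw [dif_pos h']
  exact ⟨gr_trans s (gr_symm s (gr_rep s v)) h'.choose_spec.1, h'.choose_spec.2⟩

theorem aperiodic_inj {v : A} (h : ¬ ClassPer s v) {a b : ℕ}
    (hab : s^[a] v = s^[b] v) : a = b := by
  have key : ∀ a b : ℕ, a < b → s^[a] v = s^[b] v → False := by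
    intro a b hlt he
    refine h ⟨s^[a] v, ⟨a, 0, rfl⟩, b - a, by omega, ?_⟩
    rw [← Function.iterate_add_apply]
    have hba : b - a + a = b := by omega
    rw [hba, ← he]
  rcases lt_trichotomy a b with hlt | heq | hgt
  · exact absurd (key a b hlt hab) id
  · exact heq
  · exact absurd (key b a hgt hab.symm) id

theorem diff_eq {v : A} (h : ¬ ClassPer s v) {m n m' n' : ℕ}
    (h1 : s^[m] (rep s v) = s^[n] v) (h2 : s^[m'] (rep s v) = s^[n'] v) :
    (m : ℤ) - n = (m' : ℤ) - n' := by
  have hrep : ¬ ClassPer s (rep s v) := fun hc => h ((classPer_congr s (gr_rep s v)).mp hc)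
  have e1 : s^[n' + m] (rep s v) = s^[n' + n] v := by
    rw [Function.iterate_add_apply, h1, ← Function.iterate_add_apply]
  have e2 : s^[n + m'] (rep s v) = s^[n + n'] v := by
    rw [Function.iterate_add_apply, h2, ← Function.iterate_add_apply]
  have : s^[n' + m] (rep s v) = s^[n + m'] (rep s v) := by
    rw [e1, e2, Nat.add_comm]
  have := aperiodic_inj s hrep this
  omega

noncomputable def dval (v : A) : ℤ :=
  ((gr_rep s v).choose : ℤ) - (gr_rep s v).choose_spec.choose

theorem dval_unique {v : A} (h : ¬ ClassPer s v) {m n : ℕ}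
    (hw : s^[m] (rep s v) = s^[n] v) : dval s v = (m : ℤ) - n :=
  diff_eq s h (gr_rep s v).choose_spec.choose_spec hw

theorem dval_succ {v : A} (h : ¬ ClassPer s v) : dval s (s v) = dval s v + 1 := by
  have hgr : gr s v (s v) := ⟨1, 0, rfl⟩
  have h' : ¬ ClassPer s (s v) := fun hc => h ((classPer_congr s hgr).mpr hc)
  obtain ⟨m, n, hw⟩ := gr_rep s v
  have hv : dval s v = (m : ℤ) - n := dval_unique s h hw
  have hrep : rep s (s v) = rep s v := (rep_eq s hgr).symm
  have hw' : s^[m + 1] (rep s (s v)) = s^[n] (s v) := by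
    rw [hrep, Function.iterate_succ_apply', hw]
    exact (Function.iterate_succ_apply' s n v).symm.trans (Function.iterate_succ_apply s n v)
  have hv' : dval s (s v) = (m : ℤ) + 1 - n := by
    have := dval_unique s h' hw'
    push_cast at this
    linarith
  rw [hv', hv]
  ring

noncomputable def Xset : Set A :=
  {v | (ClassPer s v ∧ v = qpt s v) ∨ (¬ ClassPer s v ∧ Even (dval s v))}

theorem splitting (C : Set A) (hCs : ∀ v ∈ C, s v ∈ C) (hfix : ∀ v ∈ C, s v ≠ v)
    (v : A) (hv : v ∈ C) :
    (∃ n, s^[n] v ∈ Xset s) ∧ (∃ n, s^[n] v ∉ Xset s) := by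
  have hiterC : ∀ n, s^[n] v ∈ C := by
    intro n
    induction n with
    | zero => exact hv
    | succ k ih => rw [Function.iterate_succ_apply']; exact hCs _ ih
  by_cases h : ClassPer s v
  · obtain ⟨hgr, hper⟩ := qpt_spec s h
    set p := qpt s v with hp
    have hgr' : gr s v p := hgr
    obtain ⟨m, n, hw⟩ := hgr
    obtain ⟨N, hN, hNp⟩ := hper
    have hcyc : ∀ j, s^[N * j] p = p := by
      intro j
      induction j with
      | zero => simp
      | succ k ih =>
        have : N * (k + 1) = N * k + N := by ring
        rw [this, Function.iterate_add_apply, hNp, ih]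
    have hk : s^[N * n - n] (s^[n] p) = p := by
      rw [← Function.iterate_add_apply]
      have hle : n ≤ N * n := Nat.le_mul_of_pos_left n hN
      have : N * n - n + n = N * n := by omega
      rw [this, hcyc n]
    have hp_orbit : s^[(N * n - n) + m] v = p := by
      rw [Function.iterate_add_apply, hw, hk]
    have hqp : qpt s p = p := by rw [← qpt_eq s hgr']
    have hCP_p : ClassPer s p := (classPer_congr s hgr').mp h
    have hpC : p ∈ C := hp_orbit ▸ hiterC _
    have hgr_p_sp : gr s p (s p) := ⟨1, 0, rfl⟩
    constructor
    · exact ⟨(N * n - n) + m, by rw [hp_orbit]; exact Or.inl ⟨hCP_p, hqp.symm⟩⟩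
    · refine ⟨(N * n - n) + m + 1, ?_⟩
      rw [Function.iterate_succ_apply', hp_orbit]
      rintro (⟨_, heq⟩ | ⟨hnc, _⟩)
      · have : qpt s (s p) = p := by rw [← qpt_eq s hgr_p_sp, hqp]
        exact hfix p hpC (heq.trans this)
      · exact hnc ((classPer_congr s hgr_p_sp).mp hCP_p)
  · have hnc : ∀ k, ¬ ClassPer s (s^[k] v) := by
      intro k hc
      exact h ((classPer_congr s ⟨k, 0, rfl⟩).mpr hc)
    have hd : ∀ k, dval s (s^[k] v) = dval s v + k := by
      intro k
      induction k with
      | zero => simp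
      | succ j ih =>
        rw [Function.iterate_succ_apply', dval_succ s (hnc j), ih]
        push_cast
        ring
    rcases Int.even_or_odd (dval s v) with he | ho
    · refine ⟨⟨0, Or.inr ⟨hnc 0, by simpa using he⟩⟩, 1, ?_⟩
      rintro (⟨hc, _⟩ | ⟨_, hev⟩)
      · exact hnc 1 hc
      · rw [hd 1] at hev
        simp only [Nat.cast_one] at hev
        exact (Int.even_add_one.mp hev) he
    · refine ⟨⟨1, Or.inr ⟨hnc 1, ?_⟩⟩, 0, ?_⟩
      · rw [hd 1]
        simp only [Nat.cast_one]
        exact Int.even_add_one.mpr (Int.not_even_iff_odd.mpr ho)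
      · rintro (⟨hc, _⟩ | ⟨_, hev⟩)
        · exact hnc 0 hc
        · rw [hd 0] at hev
          simp only [Nat.cast_zero, add_zero] at hev
          exact (Int.not_even_iff_odd.mpr ho) hev

end RamseyAlgAux


open RamseyAlgAux

open RamseyAlg in
/-- A unary algebra `(A, F)` is a Ramsey algebra iff every `a ∈ A` can be
sent by a finite composite of members of `F` to a common fixed point of all `f ∈ F`. -/
theorem stmt2 (ι A : Type) (F : ι → A → A)
    (Fop : ι → List A → A) (hOp : ∀ i x, Fop i [x] = F i x) :
    RamseyAlgebra (fun _ : ι => 1) Fop ↔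
      ∀ a : A, ∃ L : List ι,
        ∀ i : ι, F i (L.foldr (fun j h => F j ∘ h) id a) =
          L.foldr (fun j h => F j ∘ h) id a := by
  constructor
  · -- Ramsey ⇒ fixed point property
    intro hRA a₀
    by_contra hno
    push_neg at hno
    classical
    set s : A → A := fun v => if h : ∃ i, F i v ≠ v then F h.choose v else v with hs
    have hreach_s : ∀ v, Reach F v (s v) := by
      intro v
      by_cases h : ∃ i, F i v ≠ v
      · show Reach F v (if h : ∃ i, F i v ≠ v then F h.choose v else v)
        rw [dif_pos h]
        exact .step _ (.refl v)
      · show Reach F v (if h : ∃ i, F i v ≠ v then F h.choose v else v)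
        rw [dif_neg h]
        exact .refl v
    set C : Set A := {v | Reach F a₀ v} with hC
    have hfixC : ∀ v ∈ C, s v ≠ v := by
      intro v hv
      obtain ⟨Lv, hLv⟩ := reach_iff.mp hv
      obtain ⟨i, hi⟩ := hno Lv
      have hex : ∃ i, F i v ≠ v := ⟨i, by rw [← hLv]; exact hi⟩
      show (if h : ∃ i, F i v ≠ v then F h.choose v else v) ≠ v
      rw [dif_pos hex]
      exact hex.choose_spec
    have hCs : ∀ v ∈ C, s v ∈ C := fun v hv => Reach.trans hv (hreach_s v)
    obtain ⟨a, ⟨t, len, e, he, hwf, heval⟩, hom⟩ := hRA (fun _ => a₀) (Xset s)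
    obtain ⟨y, hy, hr⟩ := eval_unary F Fop hOp (t 0) (hwf 0) _ (a 0) (heval 0)
    have hya : y = a₀ := by
      have hmem : y ∈ [y] := List.mem_singleton_self y
      rw [← hy] at hmem
      obtain ⟨i, _, hieq⟩ := List.mem_map.mp hmem
      exact hieq.symm
    have haC : a 0 ∈ C := by
      rw [hC]
      exact Set.mem_setOf.mpr (hya ▸ hr)
    have hreach_iter : ∀ (k : ℕ) (v : A), Reach F v (s^[k] v) := by
      intro k v
      induction k with
      | zero => exact .refl v
      | succ j ih =>
        rw [Function.iterate_succ_apply']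
        exact Reach.trans ih (hreach_s _)
    obtain ⟨⟨n₁, hn₁⟩, ⟨n₂, hn₂⟩⟩ := splitting s C hCs hfixC (a 0) haC
    have hw1 : s^[n₁] (a 0) ∈ FR (fun _ : ι => 1) Fop a :=
      (mem_FR_iff F Fop hOp a _).mpr ⟨0, hreach_iter n₁ (a 0)⟩
    have hw2 : s^[n₂] (a 0) ∈ FR (fun _ : ι => 1) Fop a :=
      (mem_FR_iff F Fop hOp a _).mpr ⟨0, hreach_iter n₂ (a 0)⟩
    rcases hom with hsub | hdis
    · exact hn₂ (hsub hw2)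
    · exact Set.eq_empty_iff_forall_notMem.mp hdis _ ⟨hw1, hn₁⟩
  · -- fixed point property ⇒ Ramsey
    intro hfp b X
    classical
    choose L hL using hfp
    set c : ℕ → A := fun n => comp F (L (b n)) (b n) with hc
    have hcfix : ∀ n i, F i (c n) = c n := fun n i => hL (b n) i
    have hinf : {n | c n ∈ X}.Infinite ∨ {n | c n ∈ X}ᶜ.Infinite := by
      by_cases hS : {n | c n ∈ X}.Infinite
      · exact Or.inl hS
      · exact Or.inr ((Set.not_infinite.mp hS).infinite_compl)
    -- common construction
    have key : ∀ (P : ℕ → Prop), (setOf P).Infinite → (∀ n, P n → c n ∈ X ∨ c n ∉ X) →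
        True := fun _ _ _ => trivial
    rcases hinf with hS | hS
    · set e : ℕ → ℕ := Nat.nth (fun n => c n ∈ X) with he
      refine ⟨fun j => c (e j), ⟨fun j => ofList (L (b (e j))), fun _ => 1, e,
        Nat.nth_strictMono hS, fun j => ofList_wf _, fun j => ?_⟩, Or.inl ?_⟩
      · have h1 : List.range 1 = [0] := rfl
        have hsum : (∑ _m ∈ Finset.range j, (1 : ℕ)) = j := by simp
        simp only [h1, List.map_cons, List.map_nil, hsum, Nat.add_zero]
        exact eval_ofList F Fop hOp _ _
      · intro x hx
        obtain ⟨j, hr⟩ := (mem_FR_iff F Fop hOp _ x).mp hx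
        have hx_eq : x = c (e j) := reach_fixed (hcfix (e j)) hr
        rw [hx_eq]
        exact Nat.nth_mem_of_infinite hS j
    · set e : ℕ → ℕ := Nat.nth (fun n => ¬ (c n ∈ X)) with he
      have hS' : (setOf fun n => ¬ (c n ∈ X)).Infinite := hS
      refine ⟨fun j => c (e j), ⟨fun j => ofList (L (b (e j))), fun _ => 1, e,
        Nat.nth_strictMono hS', fun j => ofList_wf _, fun j => ?_⟩, Or.inr ?_⟩
      · have h1 : List.range 1 = [0] := rfl
        have hsum : (∑ _m ∈ Finset.range j, (1 : ℕ)) = j := by simp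
        simp only [h1, List.map_cons, List.map_nil, hsum, Nat.add_zero]
        exact eval_ofList F Fop hOp _ _
      · apply Set.eq_empty_iff_forall_notMem.mpr
        rintro x ⟨hxFR, hxX⟩
        obtain ⟨j, hr⟩ := (mem_FR_iff F Fop hOp _ x).mp hxFR
        have hx_eq : x = c (e j) := reach_fixed (hcfix (e j)) hr
        exact (Nat.nth_mem_of_infinite hS' j) (hx_eq ▸ hxX)
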